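/- arXiv:0807.2027 — 11 statements merged into one kernel-verified Lean document; each statement's English description precedes it below -/
import Mathlib

section
/- Let G be a group, H a subgroup of G, and A, B finite subsets of G. If r is the number of left cosets of H that intersect A, then |A·B| ≥ r · |B ∩ H|. -/
/-! A left coset `aH` meeting `A` contains the subset `a • (B ∩ H)` of `A * B`, and such subsets
lying in distinct cosets are disjoint, so counting `A * B` coset by coset gives the bound. -/

open Finset Pointwise

namespace QuotientGroup

variable {G : Type*} [Group G] [DecidableEq G] (H : Subgroup G) [DecidableEq (G ⧸ H)]

theorem mk_mem_image_mk_of_mem_mul {A K : Finset G} (hK : ∀ k ∈ K, k ∈ H) {x : G}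
    (hx : x ∈ A * K) : (x : G ⧸ H) ∈ A.image (↑) := by
  obtain ⟨a, ha, k, hk, rfl⟩ := mem_mul.mp hx
  rw [mk_mul_of_mem a (hK k hk)]
  exact mem_image_of_mem _ ha

theorem smul_finset_subset_filter_mk_eq {A K : Finset G} (hK : ∀ k ∈ K, k ∈ H) {a : G}
    (ha : a ∈ A) : a • K ⊆ {x ∈ A * K | (x : G ⧸ H) = a} := by
  intro x hx
  obtain ⟨k, hk, rfl⟩ := mem_smul_finset.mp hx
  exact mem_filter.mpr ⟨mul_mem_mul ha hk, mk_mul_of_mem a (hK k hk)⟩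

theorem card_image_mk_mul_card_le_card_mul (A K : Finset G) (hK : ∀ k ∈ K, k ∈ H) :
    #(A.image ((↑) : G → G ⧸ H)) * #K ≤ #(A * K) := by
  rw [mul_comm]
  refine mul_card_image_le_card_of_maps_to (fun _ ↦ mk_mem_image_mk_of_mem_mul H hK) _ ?_
  intro q hq
  obtain ⟨a, ha, rfl⟩ := mem_image.mp hq
  calc #K = #(a • K) := (card_smul_finset a K).symm
    _ ≤ _ := card_le_card (smul_finset_subset_filter_mk_eq H hK ha)

end QuotientGroup

/-- If `r` is the number of left cosets of `H` intersecting `A`, then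
`|A·B| ≥ r · |B ∩ H|`. -/
theorem stmt1 {G : Type*} [Group G] [DecidableEq G] (H : Subgroup G)
    [DecidablePred (· ∈ H)] [DecidableEq (G ⧸ H)] (A B : Finset G) :
    (A.image (QuotientGroup.mk : G → G ⧸ H)).card * (B.filter (· ∈ H)).card
      ≤ (A * B).card :=
  (QuotientGroup.card_image_mk_mul_card_le_card_mul H A _ fun _ hk ↦ (mem_filter.mp hk).2).trans
    (card_le_card (mul_subset_mul_left (filter_subset _ B)))
end

section
/- Let G be a group, H a subgroup of G, and A a nonempty finite subset of G. If r is the number of left cosets of H intersecting A, then |A⁻¹A ∩ H| ≥ |A|/r. In particular, if H has finite index, |A⁻¹A ∩ H| ≥ |A|/[G:H]. -/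
open Finset Pointwise

/-! Left translation by `b⁻¹` maps the elements of `A` in the coset `bH` injectively into
`A⁻¹A ∩ H`, so each of the `r` cosets meeting `A` contains at most `|A⁻¹A ∩ H|` elements of `A`. -/

namespace Finset

variable {G : Type*} [Group G] [DecidableEq G] (H : Subgroup G) [DecidablePred (· ∈ H)]
  [DecidableEq (G ⧸ H)]

theorem card_filter_mk_eq_le_card_inv_mul_filter_mem {A : Finset G} {b : G} (hb : b ∈ A) :
    #{x ∈ A | (QuotientGroup.mk x : G ⧸ H) = b} ≤ #{y ∈ A⁻¹ * A | y ∈ H} := by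
  refine card_le_card_of_injOn (b⁻¹ * ·) (fun x hx ↦ ?_) (mul_right_injective b⁻¹).injOn
  rw [mem_coe, mem_filter] at hx ⊢
  exact ⟨mul_mem_mul (inv_mem_inv hb) hx.1, QuotientGroup.eq.mp hx.2.symm⟩

theorem card_le_card_inv_mul_filter_mem_mul_card_image (A : Finset G) :
    #A ≤ #{y ∈ A⁻¹ * A | y ∈ H} * #(A.image ((↑) : G → G ⧸ H)) := by
  refine card_le_mul_card_image A _ fun q hq ↦ ?_
  obtain ⟨b, hb, rfl⟩ := mem_image.mp hq
  exact card_filter_mk_eq_le_card_inv_mul_filter_mem H hb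

end Finset

theorem Subgroup.card_image_mk_le_index {G : Type*} [Group G] (H : Subgroup G)
    [DecidableEq (G ⧸ H)] (hH : H.index ≠ 0) (A : Finset G) :
    #(A.image ((↑) : G → G ⧸ H)) ≤ H.index := by
  have : Finite (G ⧸ H) := Nat.finite_of_card_ne_zero hH
  have := Fintype.ofFinite (G ⧸ H)
  rw [Subgroup.index, Nat.card_eq_fintype_card]
  exact card_le_univ _

theorem stmt2_general {G : Type*} [Group G] [DecidableEq G] (H : Subgroup G)
    [DecidablePred (· ∈ H)] [DecidableEq (G ⧸ H)] (A : Finset G) :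
    A.card ≤ ((A⁻¹ * A).filter (· ∈ H)).card *
        (A.image (QuotientGroup.mk : G → G ⧸ H)).card ∧
    (H.index ≠ 0 → A.card ≤ ((A⁻¹ * A).filter (· ∈ H)).card * H.index) := by
  have key := card_le_card_inv_mul_filter_mem_mul_card_image H A
  exact ⟨key, fun hH ↦ key.trans (Nat.mul_le_mul_left _ (H.card_image_mk_le_index hH A))⟩

/-- If `r` is the number of left cosets of `H` intersecting the nonempty finite set `A`,
then `|A⁻¹A ∩ H| ≥ |A|/r`; in particular, if `H` has finite index,
`|A⁻¹A ∩ H| ≥ |A|/[G:H]`. -/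
theorem stmt2 {G : Type*} [Group G] [DecidableEq G] (H : Subgroup G)
    [DecidablePred (· ∈ H)] [DecidableEq (G ⧸ H)] (A : Finset G) (hA : A.Nonempty) :
    A.card ≤ ((A⁻¹ * A).filter (· ∈ H)).card *
        (A.image (QuotientGroup.mk : G → G ⧸ H)).card ∧
    (H.index ≠ 0 → A.card ≤ ((A⁻¹ * A).filter (· ∈ H)).card * H.index) :=
  stmt2_general H A
end

section
/- Let G be a group, H a subgroup, and A a nonempty finite subset of G. For any k > 0, |A_{2k+1}| ≥ (|(A⁻¹A ∩ H)_k| / |A⁻¹A ∩ H|) · |A|, where for a set S, S_m denotes the set of all products of at most m elements of S ∪ S⁻¹ ∪ {1}. -/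
/-!
Write `B = A⁻¹A ∩ H`. For `X ⊆ H`, the products `a * x` with `(a, x) ∈ A × X` hitting a fixed
`y = a₀ * x₀` are determined by `a`, and `a₀⁻¹ * a = x₀ * x⁻¹` lies in `B`; so every element of
`A * X` has at most `|B|` representations and `|A| |X| ≤ |A * X| |B|`. Take `X = B_k ⊆ H`: since
`B ⊆ A⁻¹A ⊆ A_2`, we get `A * B_k ⊆ A_{2k+1}`.
-/

open Finset Pointwise

/-- `S_m`: products of at most `m` elements of `S ∪ S⁻¹ ∪ {1}`. -/
def wordSet {G : Type*} [Group G] [DecidableEq G] (S : Finset G) (m : ℕ) : Finset G :=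
  (S ∪ S⁻¹ ∪ {1}) ^ m

section

variable {G : Type*} [Group G] [DecidableEq G]

lemma card_fiber_mul_le (H : Subgroup G) [DecidablePred (· ∈ H)] {A X : Finset G}
    (hX : (X : Set G) ⊆ H) (y : G) :
    #{p ∈ A ×ˢ X | p.1 * p.2 = y} ≤ #{g ∈ A⁻¹ * A | g ∈ H} := by
  rcases eq_empty_or_nonempty {p ∈ A ×ˢ X | p.1 * p.2 = y} with hempty | ⟨⟨a₀, x₀⟩, hp₀⟩
  · simp [hempty]
  simp only [mem_filter, mem_product] at hp₀
  obtain ⟨⟨ha₀, hx₀⟩, rfl⟩ := hp₀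
  refine card_le_card_of_injOn (fun p ↦ a₀⁻¹ * p.1) ?_ ?_
  · rintro ⟨a, x⟩ hp
    simp only [mem_coe, mem_filter, mem_product] at hp ⊢
    obtain ⟨⟨ha, hx⟩, hax⟩ := hp
    have hquot : a₀⁻¹ * a = x₀ * x⁻¹ := by
      rw [inv_mul_eq_iff_eq_mul, ← mul_assoc, ← hax, mul_inv_cancel_right]
    exact ⟨mul_mem_mul (inv_mem_inv ha₀) ha,
      hquot ▸ H.mul_mem (hX hx₀) (H.inv_mem (hX hx))⟩
  · rintro ⟨a, x⟩ hp ⟨a', x'⟩ hp' h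
    simp only [mem_coe, mem_filter, mem_product] at hp hp' h
    obtain rfl := mul_left_cancel h
    rw [← hp'.2, mul_left_cancel_iff] at hp
    rw [hp.2]

lemma coe_wordSet_subset_subgroup {H : Subgroup G} {S : Finset G} (hS : (S : Set G) ⊆ H)
    (m : ℕ) : (wordSet S m : Set G) ⊆ H := by
  rw [wordSet, coe_pow]
  refine Subgroup.pow_subset ?_
  simp only [coe_union, coe_inv, coe_singleton, Set.union_subset_iff, Set.singleton_subset_iff]
  exact ⟨⟨hS, fun g hg ↦ inv_inv g ▸ H.inv_mem (hS hg)⟩, H.one_mem⟩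

lemma wordSet_subset_wordSet_two_mul {A B : Finset G} (hB : B ⊆ A⁻¹ * A) (m : ℕ) :
    wordSet B m ⊆ wordSet A (2 * m) := by
  set S := A ∪ A⁻¹ ∪ {1}
  have hAA : A⁻¹ * A ⊆ S ^ 2 := by
    rw [sq]
    exact mul_subset_mul (subset_union_right.trans subset_union_left)
      (subset_union_left.trans subset_union_left)
  have hBinv : B⁻¹ ⊆ A⁻¹ * A := by
    simpa using inv_subset_inv hB
  rw [wordSet, wordSet, pow_mul]
  refine pow_subset_pow_left (union_subset (union_subset (hB.trans hAA) (hBinv.trans hAA)) ?_)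
  exact singleton_subset_iff.mpr (one_mem_pow (mem_union_right _ (mem_singleton_self 1)))

lemma mul_wordSet_subset_wordSet_succ (A : Finset G) (m : ℕ) :
    A * wordSet A m ⊆ wordSet A (m + 1) := by
  rw [wordSet, wordSet, pow_succ']
  exact mul_subset_mul_right (subset_union_left.trans subset_union_left)

lemma card_mul_card_le_card_mul_card_inv_mul_filter (H : Subgroup G) [DecidablePred (· ∈ H)]
    (A X : Finset G) (hX : (X : Set G) ⊆ H) :
    #X * #A ≤ #(A * X) * #{g ∈ A⁻¹ * A | g ∈ H} :=
  calc #X * #A = #(A ×ˢ X) := by rw [card_product, mul_comm]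
    _ ≤ #{g ∈ A⁻¹ * A | g ∈ H} * #((A ×ˢ X).image fun p ↦ p.1 * p.2) :=
      card_le_mul_card_image _ _ fun y _ ↦ card_fiber_mul_le H hX y
    _ = #(A * X) * #{g ∈ A⁻¹ * A | g ∈ H} := by rw [image_mul_product, mul_comm]

end

theorem stmt3_general {G : Type*} [Group G] [DecidableEq G] (H : Subgroup G)
    [DecidablePred (· ∈ H)] (A : Finset G) (k : ℕ) :
    (wordSet ((A⁻¹ * A).filter (· ∈ H)) k).card * A.card
      ≤ (wordSet A (2 * k + 1)).card * ((A⁻¹ * A).filter (· ∈ H)).card := by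
  set B := (A⁻¹ * A).filter (· ∈ H)
  calc #(wordSet B k) * #A ≤ #(A * wordSet B k) * #B :=
        card_mul_card_le_card_mul_card_inv_mul_filter H A _
          (coe_wordSet_subset_subgroup (fun _ hg ↦ (mem_filter.mp hg).2) k)
    _ ≤ #(wordSet A (2 * k + 1)) * #B := by
      gcongr
      exact (mul_subset_mul_left (wordSet_subset_wordSet_two_mul (filter_subset _ _) k)).trans
        (mul_wordSet_subset_wordSet_succ A _)

/-- `|A_{2k+1}| ≥ (|(A⁻¹A ∩ H)_k| / |A⁻¹A ∩ H|)·|A|`. -/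
theorem stmt3 {G : Type*} [Group G] [DecidableEq G] (H : Subgroup G)
    [DecidablePred (· ∈ H)] (A : Finset G) (hA : A.Nonempty) (k : ℕ) (hk : 0 < k) :
    (wordSet ((A⁻¹ * A).filter (· ∈ H)) k).card * A.card
      ≤ (wordSet A (2 * k + 1)).card * ((A⁻¹ * A).filter (· ∈ H)).card :=
  stmt3_general H A k
end

section
/- Let G be a group, H a normal subgroup, π : G → G/H the quotient map, and A₁, A₂ finite nonempty subsets of G. Then |(A₁ ∪ A₂)_4| ≥ (|π(A₁A₂)| / |π(A₁)|) · |A₁|, where S_4 denotes the set of products of at most 4 elements of S ∪ S⁻¹ ∪ {1}. -/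
/-!
Let `π : G → G/H`. Some fiber `F = A₁ ∩ π⁻¹(π b₀)` of `π` on `A₁` has at least `|A₁| / |π(A₁)|`
elements, and its translate `b₀⁻¹F` lies in `H`. Multiplying `A₁A₂` on the right by a subset of `H`
preserves cosets, so choosing one representative of each coset in `π(A₁A₂)` gives
`|π(A₁A₂)| · |F|` distinct elements of `A₁A₂b₀⁻¹F ⊆ (A₁ ∪ A₂)_4`.
-/

open Finset Pointwise

theorem Finset.exists_mem_card_le_card_image_mul_card_fiber {α β : Type*} [DecidableEq β]
    (f : α → β) {s : Finset α} (hs : s.Nonempty) :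
    ∃ x ∈ s, #s ≤ #(s.image f) * #{a ∈ s | f a = f x} := by
  obtain ⟨x, hx, hmax⟩ := s.exists_max_image (fun x => #{a ∈ s | f a = f x}) hs
  refine ⟨x, hx, mul_comm #(s.image f) _ ▸ card_le_mul_card_image s _ ?_⟩
  intro _ hb
  obtain ⟨y, hy, rfl⟩ := mem_image.1 hb
  exact hmax y hy

theorem card_image_mk_mul_card_le_card_mul {G : Type*} [Group G] [DecidableEq G]
    (H : Subgroup G) [DecidableEq (G ⧸ H)] (C B : Finset G) (hB : ∀ b ∈ B, b ∈ H) :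
    #(C.image (QuotientGroup.mk : G → G ⧸ H)) * #B ≤ #(C * B) := by
  have hrep : ∀ q ∈ C.image (QuotientGroup.mk : G → G ⧸ H), ∃ c ∈ C, (c : G ⧸ H) = q :=
    fun _ => mem_image.1
  choose! rep hrep_mem hrep_mk using hrep
  rw [← card_product]
  refine card_le_card_of_injOn (fun p => rep p.1 * p.2) ?_ ?_
  · rintro ⟨q, b⟩ hqb
    simp only [coe_product, Set.mem_prod, mem_coe] at hqb
    exact mul_mem_mul (hrep_mem q hqb.1) hqb.2
  · rintro ⟨q, b⟩ hqb ⟨q', b'⟩ hqb' h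
    simp only [coe_product, Set.mem_prod, mem_coe] at hqb hqb'
    have hq : q = q' :=
      calc q = ((rep q * b : G) : G ⧸ H) := by
            rw [QuotientGroup.mk_mul_of_mem _ (hB b hqb.2), hrep_mk q hqb.1]
        _ = ((rep q' * b' : G) : G ⧸ H) := congrArg _ h
        _ = q' := by rw [QuotientGroup.mk_mul_of_mem _ (hB b' hqb'.2), hrep_mk q' hqb'.1]
    subst hq
    exact Prod.ext rfl (mul_left_cancel h)

section wordSet

variable {G : Type*} [Group G] [DecidableEq G]

theorem subset_wordSet_one (S : Finset G) : S ⊆ wordSet S 1 := by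
  rw [wordSet, pow_one]
  exact subset_union_left.trans subset_union_left

theorem inv_subset_wordSet_one (S : Finset G) : S⁻¹ ⊆ wordSet S 1 := by
  rw [wordSet, pow_one]
  exact subset_union_right.trans subset_union_left

theorem wordSet_add (S : Finset G) (m n : ℕ) : wordSet S (m + n) = wordSet S m * wordSet S n :=
  pow_add _ m n

end wordSet

theorem stmt4_general {G : Type*} [Group G] [DecidableEq G] (H : Subgroup G)
    [DecidableEq (G ⧸ H)] (A₁ A₂ : Finset G) :
    ((A₁ * A₂).image (QuotientGroup.mk : G → G ⧸ H)).card * A₁.card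
      ≤ (wordSet (A₁ ∪ A₂) 4).card *
          (A₁.image (QuotientGroup.mk : G → G ⧸ H)).card := by
  rcases A₁.eq_empty_or_nonempty with rfl | hA₁
  · simp
  set π : G → G ⧸ H := QuotientGroup.mk
  obtain ⟨b₀, hb₀, hfiber⟩ := exists_mem_card_le_card_image_mul_card_fiber π hA₁
  set F := {a ∈ A₁ | π a = π b₀}
  have hF_mem : ∀ b ∈ {b₀⁻¹} * F, b ∈ H := by
    rw [singleton_mul]
    intro _ hb
    obtain ⟨a, ha, rfl⟩ := mem_smul_finset.1 hb
    exact QuotientGroup.eq.1 (mem_filter.1 ha).2.symm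
  have hsub : A₁ * A₂ * ({b₀⁻¹} * F) ⊆ wordSet (A₁ ∪ A₂) 4 := by
    have hA₁ : A₁ ⊆ wordSet (A₁ ∪ A₂) 1 := subset_union_left.trans (subset_wordSet_one _)
    have hA₂ : A₂ ⊆ wordSet (A₁ ∪ A₂) 1 := subset_union_right.trans (subset_wordSet_one _)
    have hb₀ : {b₀⁻¹} ⊆ wordSet (A₁ ∪ A₂) 1 := singleton_subset_iff.2 <|
      inv_subset_wordSet_one _ (inv_mem_inv (mem_union_left _ hb₀))
    rw [show 4 = 1 + 1 + (1 + 1) from rfl, wordSet_add, wordSet_add]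
    exact mul_subset_mul (mul_subset_mul hA₁ hA₂)
      (mul_subset_mul hb₀ ((filter_subset _ _).trans hA₁))
  calc #((A₁ * A₂).image π) * #A₁
      ≤ #((A₁ * A₂).image π) * (#(A₁.image π) * #F) := Nat.mul_le_mul_left _ hfiber
    _ = #((A₁ * A₂).image π) * #({b₀⁻¹} * F) * #(A₁.image π) := by
        rw [card_singleton_mul]
        ring
    _ ≤ #(wordSet (A₁ ∪ A₂) 4) * #(A₁.image π) := by
        gcongr
        exact (card_image_mk_mul_card_le_card_mul H _ _ hF_mem).trans (card_le_card hsub)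

/-- `|(A₁ ∪ A₂)_4| ≥ (|π(A₁A₂)|/|π(A₁)|)·|A₁|` for the quotient map `π : G → G/H`. -/
theorem stmt4 {G : Type*} [Group G] [DecidableEq G] (H : Subgroup G) [H.Normal]
    [DecidableEq (G ⧸ H)] (A₁ A₂ : Finset G) (h₁ : A₁.Nonempty) (h₂ : A₂.Nonempty) :
    ((A₁ * A₂).image (QuotientGroup.mk : G → G ⧸ H)).card * A₁.card
      ≤ (wordSet (A₁ ∪ A₂) 4).card *
          (A₁.image (QuotientGroup.mk : G → G ⧸ H)).card :=
  stmt4_general H A₁ A₂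
end

section
/- Let G be a group, H a normal subgroup, π : G → G/H the quotient map. Let A be a finite subset of G and A' ⊆ A. Then |A' · (A⁻¹A ∩ H)| ≥ (|π(A')| / |π(A)|) · |A|. -/
/-!
Let `m` be the size of the largest fibre `A ∩ a₀H` of `π` on `A`, so that `|A| ≤ m·|π(A)|`.
Translating that fibre by `a₀⁻¹` lands it in `A⁻¹A ∩ H`, so for every `a' ∈ A'` the set
`A'·(A⁻¹A ∩ H)` meets the coset `a'H` in at least the `m` points `a'a₀⁻¹(A ∩ a₀H)`. As
`A'·(A⁻¹A ∩ H)` lies in the cosets of `π(A')`, it has at least `m·|π(A')|` elements.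
-/

open Finset Pointwise

namespace Finset

variable {G : Type*} [Group G] [DecidableEq G] {H : Subgroup G} [DecidableEq (G ⧸ H)]

theorem mk_mem_image_mk_of_mem_mul {A K : Finset G} (hK : ∀ k ∈ K, k ∈ H) {x : G}
    (hx : x ∈ A * K) : (x : G ⧸ H) ∈ A.image QuotientGroup.mk := by
  obtain ⟨a, ha, k, hk, rfl⟩ := mem_mul.mp hx
  rw [QuotientGroup.mk_mul_of_mem a (hK k hk)]
  exact mem_image_of_mem _ ha

theorem smul_subset_filter_mk_eq_mul {A K : Finset G} (hK : ∀ k ∈ K, k ∈ H) {a : G}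
    (ha : a ∈ A) : a • K ⊆ {x ∈ A * K | QuotientGroup.mk x = (a : G ⧸ H)} := by
  intro _ hx
  obtain ⟨k, hk, rfl⟩ := mem_smul_finset.mp hx
  exact mem_filter.mpr ⟨mul_mem_mul ha hk, QuotientGroup.mk_mul_of_mem a (hK k hk)⟩

variable [DecidablePred (· ∈ H)]

theorem inv_smul_filter_mk_eq_subset {A : Finset G} {a : G} (ha : a ∈ A) :
    a⁻¹ • {x ∈ A | QuotientGroup.mk x = (a : G ⧸ H)} ⊆ {y ∈ A⁻¹ * A | y ∈ H} := by
  intro _ hy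
  obtain ⟨x, hx, rfl⟩ := mem_smul_finset.mp hy
  obtain ⟨hxA, hxa⟩ := mem_filter.mp hx
  exact mem_filter.mpr ⟨mul_mem_mul (inv_mem_inv ha) hxA, QuotientGroup.eq.mp hxa.symm⟩

theorem card_filter_mk_eq_le_card_filter_mul {A A' : Finset G} {a a' : G} (ha : a ∈ A)
    (ha' : a' ∈ A') :
    #{x ∈ A | QuotientGroup.mk x = (a : G ⧸ H)} ≤
      #{x ∈ A' * {y ∈ A⁻¹ * A | y ∈ H} | QuotientGroup.mk x = (a' : G ⧸ H)} := by
  rw [← card_smul_finset (a' * a⁻¹), mul_smul]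
  exact card_le_card <| (smul_finset_subset_smul_finset (inv_smul_filter_mk_eq_subset ha)).trans
    (smul_subset_filter_mk_eq_mul (fun y hy => (mem_filter.mp hy).2) ha')

end Finset

theorem stmt5_general {G : Type*} [Group G] [DecidableEq G] (H : Subgroup G)
    [DecidablePred (· ∈ H)] [DecidableEq (G ⧸ H)]
    (A A' : Finset G) :
    (A'.image (QuotientGroup.mk : G → G ⧸ H)).card * A.card
      ≤ (A' * ((A⁻¹ * A).filter (· ∈ H))).card *
          (A.image (QuotientGroup.mk : G → G ⧸ H)).card := by
  rcases A.eq_empty_or_nonempty with rfl | hA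
  · simp
  obtain ⟨a₀, ha₀, hmax⟩ :=
    A.exists_max_image (fun a => #{x ∈ A | QuotientGroup.mk x = (a : G ⧸ H)}) hA
  set m := #{x ∈ A | QuotientGroup.mk x = (a₀ : G ⧸ H)}
  have hA_le : #A ≤ m * #(A.image (QuotientGroup.mk : G → G ⧸ H)) :=
    card_le_mul_card_image A m (forall_mem_image.mpr hmax)
  have hS_ge : m * #(A'.image (QuotientGroup.mk : G → G ⧸ H)) ≤
      #(A' * {y ∈ A⁻¹ * A | y ∈ H}) :=
    mul_card_image_le_card_of_maps_to
      (fun _ hx => mk_mem_image_mk_of_mem_mul (fun _ hy => (mem_filter.mp hy).2) hx) m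
      (forall_mem_image.mpr fun _ ha' => card_filter_mk_eq_le_card_filter_mul ha₀ ha')
  calc #(A'.image (QuotientGroup.mk : G → G ⧸ H)) * #A
      ≤ #(A'.image QuotientGroup.mk) * (m * #(A.image QuotientGroup.mk)) := by gcongr
    _ = m * #(A'.image QuotientGroup.mk) * #(A.image QuotientGroup.mk) := by ring
    _ ≤ #(A' * {y ∈ A⁻¹ * A | y ∈ H}) * #(A.image QuotientGroup.mk) := by gcongr

/-- `|A'·(A⁻¹A ∩ H)| ≥ (|π(A')|/|π(A)|)·|A|` for the quotient map `π : G → G/H`. -/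
theorem stmt5 {G : Type*} [Group G] [DecidableEq G] (H : Subgroup G) [H.Normal]
    [DecidablePred (· ∈ H)] [DecidableEq (G ⧸ H)]
    (A A' : Finset G) (hA : A.Nonempty) (hsub : A' ⊆ A) :
    (A'.image (QuotientGroup.mk : G → G ⧸ H)).card * A.card
      ≤ (A' * ((A⁻¹ * A).filter (· ∈ H))).card *
          (A.image (QuotientGroup.mk : G → G ⧸ H)).card :=
  stmt5_general H A A'
end

section
/- Let A and B be finite sets and S ⊆ A × B. For each a ∈ A let B_a = {b ∈ B : (a,b) ∈ S}. Then there exists a₀ ∈ A such that Σ_{a ∈ A} |B_{a₀} ∩ B_a| ≥ |S|² / (|A|·|B|). -/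
/-!
Counting the triples `(a₀, a, b)` with `b ∈ B_{a₀} ∩ B_a` column by column gives
`∑_{a₀} ∑_a |B_{a₀} ∩ B_a| = ∑_b |A_b|²`, where `A_b = {a : (a, b) ∈ S}`. Since `|S| = ∑_b |A_b|`,
Cauchy–Schwarz bounds this from below by `|S|² / |B|`, and some `a₀` attains at least the
average `|S|² / (|A| |B|)`.
-/

open Finset

namespace Finset

variable {α β : Type*} (A : Finset α) (B : Finset β)

theorem card_eq_sum_card_bipartiteBelow_of_subset_product [DecidableEq α] [DecidableEq β]
    {S : Finset (α × β)} (hS : S ⊆ A ×ˢ B) :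
    #S = ∑ b ∈ B, #(A.bipartiteBelow (fun a b => (a, b) ∈ S) b) := by
  rw [← sum_card_bipartiteAbove_eq_sum_card_bipartiteBelow]
  calc #S = #{p ∈ A ×ˢ B | p ∈ S} := by rw [filter_mem_eq_inter, inter_eq_right.2 hS]
    _ = _ := by simp_rw [card_filter, sum_product, bipartiteAbove, card_filter]

theorem sum_sum_card_inter_bipartiteAbove_eq_sum_sq [DecidableEq β]
    (r : α → β → Prop) [∀ a b, Decidable (r a b)] :
    ∑ a₀ ∈ A, ∑ a ∈ A, #(B.bipartiteAbove r a₀ ∩ B.bipartiteAbove r a) =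
      ∑ b ∈ B, #(A.bipartiteBelow r b) ^ 2 := by
  have h := sum_card_bipartiteAbove_eq_sum_card_bipartiteBelow (s := A ×ˢ A) (t := B)
    (fun p b => r p.1 b ∧ r p.2 b)
  simp_rw [sq, ← card_product,
    ← sum_product' (f := fun a₀ a => #(B.bipartiteAbove r a₀ ∩ B.bipartiteAbove r a))]
  convert h using 3 with p _ b
  · simp [bipartiteAbove, filter_and]
  · ext; simp [bipartiteBelow, and_and_and_comm]

end Finset

theorem stmt7_general {α β : Type*} [DecidableEq α] [DecidableEq β]
    (A : Finset α) (B : Finset β) (hA : A.Nonempty)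
    (S : Finset (α × β)) (hS : S ⊆ A ×ˢ B) :
    ∃ a₀ ∈ A,
      S.card ^ 2 ≤
        (∑ a ∈ A, ((B.filter fun b => (a₀, b) ∈ S) ∩ (B.filter fun b => (a, b) ∈ S)).card) *
          (A.card * B.card) := by
  set r : α → β → Prop := fun a b => (a, b) ∈ S
  have hCS : #S ^ 2 ≤ #B * ∑ b ∈ B, #(A.bipartiteBelow r b) ^ 2 := by
    rw [card_eq_sum_card_bipartiteBelow_of_subset_product A B hS]
    exact sq_sum_le_card_mul_sum_sq
  refine exists_le_of_sum_le hA ?_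
  calc ∑ _a ∈ A, #S ^ 2 = #A * #S ^ 2 := by rw [sum_const, smul_eq_mul]
    _ ≤ #A * (#B * ∑ b ∈ B, #(A.bipartiteBelow r b) ^ 2) := by gcongr
    _ = _ := by
      rw [← sum_mul, ← sum_sum_card_inter_bipartiteAbove_eq_sum_sq A B r]
      simp only [bipartiteAbove, r]
      ring

/-- Counting lemma: for `S ⊆ A × B` with fibers `B_a`, there is `a₀ ∈ A` with
`Σ_{a ∈ A} |B_{a₀} ∩ B_a| ≥ |S|²/(|A|·|B|)`. -/
theorem stmt7 {α β : Type*} [DecidableEq α] [DecidableEq β]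
    (A : Finset α) (B : Finset β) (hA : A.Nonempty) (hB : B.Nonempty)
    (S : Finset (α × β)) (hS : S ⊆ A ×ˢ B) :
    ∃ a₀ ∈ A,
      S.card ^ 2 ≤
        (∑ a ∈ A, ((B.filter fun b => (a₀, b) ∈ S) ∩ (B.filter fun b => (a, b) ∈ S)).card) *
          (A.card * B.card) :=
  stmt7_general A B hA S hS
end

section
/- Let G be a group acting on an abelian group R (written additively) by automorphisms. Suppose there is a central element z ∈ Z(G) with z² = e such that z·v = −v for all v ∈ R, and suppose every element of R is uniquely 2-divisible. Then every 1-cocycle is a coboundary: for any map s : G → R satisfying s(g₁g₂) = s(g₁) + g₁·s(g₂) for all g₁, g₂ ∈ G, there exists v ∈ R such that s(g) = g·v − v for all g ∈ G. -/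
/-!
Comparing the cocycle identity at `g * z` and at `z * g = g * z` gives
`2 s(g) = s(z) - g • s(z)`, so `s` is determined by `s(z)` after halving. The coboundary of
any `v` with `2 v = -s(z)` satisfies the same doubled identity, hence equals `s`.
-/

section Cocycle

variable {G R : Type*} [Group G] [AddCommGroup R] [DistribMulAction G R]

theorem cocycle_add_self_eq_of_smul_eq_neg {s : G → R}
    (hs : ∀ g₁ g₂ : G, s (g₁ * g₂) = s g₁ + g₁ • s g₂) {z g : G} (hcomm : g * z = z * g)
    (hneg : ∀ v : R, z • v = -v) :
    s g + s g = s z - g • s z := by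
  have h := hs g z
  rw [hcomm, hs z g, hneg] at h
  rw [eq_sub_iff_add_eq, add_assoc, ← h]
  abel

theorem coboundary_add_self_eq (g : G) (v : R) :
    (g • v - v) + (g • v - v) = g • (v + v) - (v + v) := by
  rw [smul_add]
  abel

end Cocycle

theorem stmt8_general {G R : Type*} [Group G] [AddCommGroup R] [DistribMulAction G R]
    (z : G) (hz : z ∈ Subgroup.center G)
    (hneg : ∀ v : R, z • v = -v)
    (hdiv : ∀ r : R, ∃! r' : R, r' + r' = r)
    (s : G → R) (hs : ∀ g₁ g₂ : G, s (g₁ * g₂) = s g₁ + g₁ • s g₂) :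
    ∃ v : R, ∀ g : G, s g = g • v - v := by
  obtain ⟨v, hv, -⟩ := hdiv (-s z)
  refine ⟨v, fun g => (hdiv (s z - g • s z)).unique ?_ ?_⟩
  · exact cocycle_add_self_eq_of_smul_eq_neg hs (Subgroup.mem_center_iff.mp hz g) hneg
  · rw [coboundary_add_self_eq, hv, smul_neg, sub_neg_eq_add, neg_add_eq_sub]

/-- Let `G` act on an abelian group `R` by automorphisms. If some central
involution `z` acts as `-1` on `R`, and `R` is uniquely 2-divisible, then every
1-cocycle `s : G → R` is a coboundary. -/
theorem stmt8 {G R : Type*} [Group G] [AddCommGroup R] [DistribMulAction G R]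
    (z : G) (hz : z ∈ Subgroup.center G) (hz2 : z * z = 1)
    (hneg : ∀ v : R, z • v = -v)
    (hdiv : ∀ r : R, ∃! r' : R, r' + r' = r)
    (s : G → R) (hs : ∀ g₁ g₂ : G, s (g₁ * g₂) = s g₁ + g₁ • s g₂) :
    ∃ v : R, ∀ g : G, s g = g • v - v :=
  stmt8_general z hz hneg hdiv s hs
end

section
/- Let G be a group and A, A' finite nonempty subsets of G. Then there exists g ∈ A' such that |C_G(g) ∩ A⁻¹A| ≥ (|A| / |A·A'·A⁻¹|) · N, where N is the number of conjugacy classes of G that intersect A'. -/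
/-!
For `x ∈ A'`, the fibres of `a ↦ a x a⁻¹` on `A` embed into `C_G(x) ∩ A⁻¹A` via `a ↦ a₀⁻¹ a`,
so `|A| ≤ |C_G(x) ∩ A⁻¹A| · |{a x a⁻¹ : a ∈ A}|`. For representatives `x` of the distinct
conjugacy classes meeting `A'`, the sets `{a x a⁻¹ : a ∈ A}` are disjoint subsets of `A A' A⁻¹`.
Summing the first bound over the representatives and choosing `g ∈ A'` with the largest
centralizer count gives the theorem.
-/

open Finset Pointwise

section Conjugates

variable {G : Type*} [Group G]

lemma conj_eq_conj_iff_commute_inv_mul (a b x : G) :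
    a * x * a⁻¹ = b * x * b⁻¹ ↔ b⁻¹ * a * x = x * (b⁻¹ * a) := by
  constructor <;> intro h
  · calc b⁻¹ * a * x = b⁻¹ * (a * x * a⁻¹) * a := by group
      _ = x * (b⁻¹ * a) := by rw [h]; group
  · calc a * x * a⁻¹ = b * (b⁻¹ * a * x) * a⁻¹ := by group
      _ = b * x * b⁻¹ := by rw [h]; group

variable [DecidableEq G]

def conjugatesBy (A : Finset G) (x : G) : Finset G :=
  A.image fun a => a * x * a⁻¹

lemma card_le_card_centralizer_mul_card_conjugatesBy (A : Finset G) (x : G) :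
    #A ≤ #{y ∈ A⁻¹ * A | y * x = x * y} * #(conjugatesBy A x) := by
  refine card_le_mul_card_image A _ fun b hb => ?_
  obtain ⟨a₀, ha₀, rfl⟩ := mem_image.mp hb
  refine card_le_card_of_injOn (a₀⁻¹ * ·) (fun a ha => ?_) (mul_right_injective a₀⁻¹).injOn
  obtain ⟨haA, hconj⟩ := mem_filter.mp ha
  exact mem_filter.mpr
    ⟨mul_mem_mul (inv_mem_inv ha₀) haA, (conj_eq_conj_iff_commute_inv_mul _ _ _).mp hconj⟩

lemma conjClassesMk_eq_of_mem_conjugatesBy {A : Finset G} {x y : G}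
    (hy : y ∈ conjugatesBy A x) : ConjClasses.mk y = ConjClasses.mk x := by
  obtain ⟨a, -, rfl⟩ := mem_image.mp hy
  exact ConjClasses.mk_eq_mk_iff_isConj.mpr (isConj_iff.mpr ⟨a, rfl⟩).symm

lemma pairwiseDisjoint_conjugatesBy (A : Finset G) {R : Set G}
    (hR : R.InjOn ConjClasses.mk) : R.PairwiseDisjoint (conjugatesBy A) := by
  intro x hx y hy hne
  refine disjoint_left.mpr fun z hzx hzy => hne (hR hx hy ?_)
  rw [← conjClassesMk_eq_of_mem_conjugatesBy hzx, conjClassesMk_eq_of_mem_conjugatesBy hzy]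

lemma sum_card_conjugatesBy_le (A A' R : Finset G) (hRA' : R ⊆ A')
    (hR : Set.InjOn ConjClasses.mk (R : Set G)) :
    ∑ x ∈ R, #(conjugatesBy A x) ≤ #(A * A' * A⁻¹) := by
  rw [← card_biUnion (pairwiseDisjoint_conjugatesBy A hR)]
  refine card_le_card (biUnion_subset.mpr fun x hx y hy => ?_)
  obtain ⟨a, ha, rfl⟩ := mem_image.mp hy
  exact mul_mem_mul (mul_mem_mul ha (hRA' hx)) (inv_mem_inv ha)

end Conjugates

theorem stmt10_general {G : Type*} [Group G] [DecidableEq G] [DecidableEq (ConjClasses G)]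
    (A A' : Finset G) (hA' : A'.Nonempty) :
    ∃ g ∈ A',
      A.card * (A'.image ConjClasses.mk).card ≤
        ((A⁻¹ * A).filter fun x => x * g = g * x).card * (A * A' * A⁻¹).card := by
  set c : G → ℕ := fun g => #{x ∈ A⁻¹ * A | x * g = g * x}
  obtain ⟨g, hg, hmax⟩ := exists_max_image A' c hA'
  obtain ⟨R, hRA', hR, hRimage⟩ := exists_subset_injOn_image_eq_of_surjOn (A' : Set G)
    (A'.image ConjClasses.mk) (by rw [coe_image]; exact Set.surjOn_image _ _)
  refine ⟨g, hg, ?_⟩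
  rw [← hRimage, card_image_of_injOn hR]
  calc #A * #R = ∑ _x ∈ R, #A := by rw [sum_const, smul_eq_mul, mul_comm]
    _ ≤ ∑ x ∈ R, c x * #(conjugatesBy A x) :=
      sum_le_sum fun x _ => card_le_card_centralizer_mul_card_conjugatesBy A x
    _ ≤ ∑ x ∈ R, c g * #(conjugatesBy A x) :=
      sum_le_sum fun x hx => Nat.mul_le_mul_right _ (hmax x (hRA' hx))
    _ = c g * ∑ x ∈ R, #(conjugatesBy A x) := (mul_sum _ _ _).symm
    _ ≤ c g * #(A * A' * A⁻¹) :=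
      Nat.mul_le_mul_left _ (sum_card_conjugatesBy_le A A' R (coe_subset.mp hRA') hR)

/-- There is `g ∈ A'` with `|C_G(g) ∩ A⁻¹A| ≥ (|A|/|A·A'·A⁻¹|)·|Cl_G(A')|`. -/
theorem stmt10 {G : Type*} [Group G] [DecidableEq G] [DecidableEq (ConjClasses G)]
    (A A' : Finset G) (hA : A.Nonempty) (hA' : A'.Nonempty) :
    ∃ g ∈ A',
      A.card * (A'.image ConjClasses.mk).card ≤
        ((A⁻¹ * A).filter fun x => x * g = g * x).card * (A * A' * A⁻¹).card :=
  stmt10_general A A' hA'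
end

section
/- Let G be a group with commutator subgroup G⁽¹⁾ = [G,G], and let A be a finite nonempty subset of G. Then for every δ > 0, either |A·A·A⁻¹| ≥ |A|^{1+δ}, or there is g ∈ A such that |C_G(g) ∩ A⁻¹A| · |G⁽¹⁾ ∩ A⁻¹A| ≥ |A|^{1−δ}. -/
/-!
Count the pairs `(a, g) ∈ A × A` through the map `(a, g) ↦ a g a⁻¹`, whose image lies in
`A·A·A⁻¹`. Two pairs `(a, g)`, `(b, h)` in one fibre have conjugate second coordinates, so
`g⁻¹h ∈ [G,G] ∩ A⁻¹A`; and when moreover `g = h`, the element `b⁻¹a ∈ A⁻¹A` centralizes `g`.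
Hence every fibre has at most `|[G,G] ∩ A⁻¹A| · max_{g ∈ A} |C_G(g) ∩ A⁻¹A|` elements, and
`|A|² ≤ |A·A·A⁻¹| · |C_G(g) ∩ A⁻¹A| · |[G,G] ∩ A⁻¹A|` for a maximizing `g ∈ A`.
Splitting `|A|² = |A|^{1+δ} |A|^{1-δ}` gives the dichotomy.
-/

open Finset Pointwise
open scoped commutatorElement

section Group

variable {G : Type*} [Group G]

theorem inv_mul_mem_commutator_of_conj_eq {a b g h : G} (hconj : a * g * a⁻¹ = b * h * b⁻¹) :
    g⁻¹ * h ∈ commutator G := by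
  have hh : h = (b⁻¹ * a) * g * (b⁻¹ * a)⁻¹ := by
    calc h = b⁻¹ * (b * h * b⁻¹) * b := by group
      _ = b⁻¹ * (a * g * a⁻¹) * b := by rw [hconj]
      _ = (b⁻¹ * a) * g * (b⁻¹ * a)⁻¹ := by group
  have : g⁻¹ * h = ⁅g⁻¹, b⁻¹ * a⁆ := by
    rw [hh, commutatorElement_def]
    group
  rw [this, commutator_def]
  exact Subgroup.commutator_mem_commutator (Subgroup.mem_top _) (Subgroup.mem_top _)

theorem inv_mul_commute_of_conj_eq {a b g : G} (hconj : a * g * a⁻¹ = b * g * b⁻¹) :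
    b⁻¹ * a * g = g * (b⁻¹ * a) := by
  calc b⁻¹ * a * g = b⁻¹ * (a * g * a⁻¹) * a := by group
    _ = b⁻¹ * (b * g * b⁻¹) * a := by rw [hconj]
    _ = g * (b⁻¹ * a) := by group

theorem card_le_card_of_inv_mul_mem {α : Type*} {X : Finset α} {S : Finset G} (f : α → G)
    (hf : Set.InjOn f X) (hXS : ∀ x ∈ X, ∀ y ∈ X, (f x)⁻¹ * f y ∈ S) : #X ≤ #S := by
  obtain rfl | ⟨x₀, hx₀⟩ := X.eq_empty_or_nonempty
  · simp
  refine card_le_card_of_injOn (fun x => (f x₀)⁻¹ * f x) (fun x hx => hXS x₀ hx₀ x hx) ?_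
  exact fun x hx y hy hxy => hf hx hy (mul_left_cancel hxy)

variable [DecidableEq G] [DecidablePred (· ∈ commutator G)]

theorem card_conj_fiber_le {A : Finset G} {M : ℕ}
    (hM : ∀ g ∈ A, #((A⁻¹ * A).filter fun x => x * g = g * x) ≤ M) (y : G) :
    #((A ×ˢ A).filter fun p => p.1 * p.2 * p.1⁻¹ = y) ≤
      M * #((A⁻¹ * A).filter (· ∈ commutator G)) := by
  set F := (A ×ˢ A).filter fun p => p.1 * p.2 * p.1⁻¹ = y
  have hF : ∀ p ∈ F, p.1 ∈ A ∧ p.2 ∈ A ∧ p.1 * p.2 * p.1⁻¹ = y := by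
    simp [F, and_assoc]
  calc #F ≤ M * #(F.image Prod.snd) := card_le_mul_card_image F M fun g hg => ?centralizer
    _ ≤ M * #((A⁻¹ * A).filter (· ∈ commutator G)) := by
      refine Nat.mul_le_mul_left M (card_le_card_of_inv_mul_mem id (Set.injOn_id _) ?_)
      intro g hg h hh
      obtain ⟨p, hp, rfl⟩ := mem_image.1 hg
      obtain ⟨q, hq, rfl⟩ := mem_image.1 hh
      obtain ⟨-, hg, hp⟩ := hF p hp
      obtain ⟨-, hh, hq⟩ := hF q hq
      exact mem_filter.2 ⟨mul_mem_mul (inv_mem_inv hg) hh,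
        inv_mul_mem_commutator_of_conj_eq (hp.trans hq.symm)⟩
  case centralizer =>
    obtain ⟨-, hg⟩ := mem_image.1 hg
    refine (card_le_card_of_inv_mul_mem Prod.fst ?_ ?_).trans (hM g ?_)
    · intro p hp q hq hpq
      exact Prod.ext hpq ((mem_filter.1 hp).2.trans (mem_filter.1 hq).2.symm)
    · intro p hp q hq
      obtain ⟨hpF, hpg⟩ := mem_filter.1 hp
      obtain ⟨hqF, hqg⟩ := mem_filter.1 hq
      obtain ⟨ha, -, hpy⟩ := hF p hpF
      obtain ⟨hb, -, hqy⟩ := hF q hqF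
      rw [hpg] at hpy
      rw [hqg] at hqy
      exact mem_filter.2 ⟨mul_mem_mul (inv_mem_inv ha) hb,
        inv_mul_commute_of_conj_eq (hqy.trans hpy.symm)⟩
    · obtain ⟨p, hp, rfl⟩ := mem_image.1 hg
      exact (hF p hp).2.1

theorem exists_card_mul_card_le {A : Finset G} (hA : A.Nonempty) :
    ∃ g ∈ A, #A * #A ≤ #(A * A * A⁻¹) *
      (#((A⁻¹ * A).filter fun x => x * g = g * x) * #((A⁻¹ * A).filter (· ∈ commutator G))) := by
  obtain ⟨g, hg, hmax⟩ :=
    exists_max_image A (fun g => #((A⁻¹ * A).filter fun x => x * g = g * x)) hA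
  refine ⟨g, hg, ?_⟩
  have himage : (A ×ˢ A).image (fun p => p.1 * p.2 * p.1⁻¹) ⊆ A * A * A⁻¹ := by
    simp only [image_subset_iff, mem_product, and_imp, Prod.forall]
    exact fun a b ha hb => mul_mem_mul (mul_mem_mul ha hb) (inv_mem_inv ha)
  calc #A * #A = #(A ×ˢ A) := (card_product A A).symm
    _ ≤ _ := card_le_mul_card_image _ _ fun y _ => card_conj_fiber_le hmax y
    _ ≤ _ := by rw [mul_comm]; exact Nat.mul_le_mul_right _ (card_le_card himage)

end Group

/-- For every `δ > 0`, either `|A·A·A⁻¹| ≥ |A|^{1+δ}`, or there is `g ∈ A` with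
`|C_G(g) ∩ A⁻¹A|·|[G,G] ∩ A⁻¹A| ≥ |A|^{1-δ}`. -/
theorem stmt11 {G : Type*} [Group G] [DecidableEq G]
    [DecidablePred (· ∈ commutator G)] (A : Finset G) (hA : A.Nonempty) :
    ∀ δ : ℝ, 0 < δ →
      ((A.card : ℝ) ^ ((1 : ℝ) + δ) ≤ ((A * A * A⁻¹).card : ℝ)) ∨
      ∃ g ∈ A,
        (A.card : ℝ) ^ ((1 : ℝ) - δ) ≤
          (((A⁻¹ * A).filter fun x => x * g = g * x).card : ℝ) *
            (((A⁻¹ * A).filter (· ∈ commutator G)).card : ℝ) := by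
  intro δ _
  refine or_iff_not_imp_left.2 fun hsmall => ?_
  obtain ⟨g, hg, hcount⟩ := exists_card_mul_card_le hA
  refine ⟨g, hg, ?_⟩
  have hpos : (0 : ℝ) < (A.card : ℝ) ^ ((1 : ℝ) + δ) :=
    Real.rpow_pos_of_pos (by exact_mod_cast hA.card_pos) _
  have hsplit : (A.card : ℝ) ^ ((1 : ℝ) + δ) * (A.card : ℝ) ^ ((1 : ℝ) - δ) = A.card * A.card := by
    rw [← Real.rpow_add' (Nat.cast_nonneg _) (by norm_num), add_add_sub_cancel]
    norm_num [sq]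
  refine le_of_mul_le_mul_left ?_ hpos
  calc _ = (A.card : ℝ) * A.card := hsplit
    _ ≤ ((A * A * A⁻¹).card : ℝ) * _ := by exact_mod_cast hcount
    _ ≤ _ := mul_le_mul_of_nonneg_right (not_le.1 hsmall).le (by positivity)
end

section
/- Let G be a group, H ≤ G a subgroup of index 2, and A' ⊆ G a finite subset not contained in H. Write A' = C ∪ gC' with C, C' ⊆ H, g ∉ H, and e ∈ C'. Then the set A := C ∪ C' ∪ gCg⁻¹ ∪ gC'g⁻¹ ∪ {g²} is contained in A'_3 ∩ H, satisfies (1/2)|A'| ≤ |A| ≤ 4|A'|, contains C ∪ C' and g², satisfies g⁻¹Ag ⊆ A_3, and the subgroup generated by A' equals ⟨A⟩ ∪ g⟨A⟩. -/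
/-!
Since `H` has index two it is normal and contains all squares, so `A ⊆ H`; since `C ⊆ H` and
`gC'` misses `H`, `|A'| = |C| + |C'|`, which gives both size bounds. Every element of `A` is a word
of length at most three in `A'` (`c' = g⁻¹ (g c')`, `g c g⁻¹`, `g c' g⁻¹ = (g c') g⁻¹`), and
conjugating by `g⁻¹` maps `A` into `A_3` (`g⁻¹ c g = g⁻² (g c g⁻¹) g²`). Hence `K = ⟨A⟩` satisfies
`g⁻¹ K g ⊆ K` and `g² ∈ K`, which is exactly what makes `K ∪ gK` closed under products and
inverses; this subgroup contains `A' = C ∪ gC'` and lies in `⟨A'⟩`, so it is `⟨A'⟩`.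
-/

open Finset Pointwise

section

variable {G : Type*} [Group G]

namespace Subgroup

lemma conj_mem_closure_of_forall {A : Set G} {g : G}
    (hA : ∀ a ∈ A, g⁻¹ * a * g ∈ closure A) {x : G} (hx : x ∈ closure A) :
    g⁻¹ * x * g ∈ closure A := by
  have hle : closure A ≤ (closure A).comap (MulAut.conj g⁻¹).toMonoidHom :=
    (closure_le _).2 fun a ha => by simpa using hA a ha
  simpa using hle hx

variable (K : Subgroup G) {g : G}

def unionSmul (hconj : ∀ x ∈ K, g⁻¹ * x * g ∈ K) (hsq : g ^ 2 ∈ K) : Subgroup G where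
  carrier := K ∪ g • (K : Set G)
  one_mem' := Or.inl K.one_mem
  mul_mem' := by
    simp only [Set.mem_union, mem_leftCoset_iff, SetLike.mem_coe]
    rintro a b (ha | ha) (hb | hb)
    · exact Or.inl (mul_mem ha hb)
    · right
      simpa [mul_assoc] using mul_mem (hconj a ha) hb
    · right
      simpa [mul_assoc] using mul_mem ha hb
    · left
      have : g ^ 2 * (g⁻¹ * (g⁻¹ * a) * g) * (g⁻¹ * b) = a * b := by group
      exact this ▸ mul_mem (mul_mem hsq (hconj _ ha)) hb
  inv_mem' := by
    simp only [Set.mem_union, mem_leftCoset_iff, SetLike.mem_coe]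
    rintro a (ha | ha)
    · exact Or.inl (inv_mem ha)
    · right
      have : g⁻¹ * (g⁻¹ * a)⁻¹ * g * (g ^ 2)⁻¹ = g⁻¹ * a⁻¹ := by group
      exact this ▸ mul_mem (hconj _ (inv_mem ha)) (inv_mem hsq)

variable {K}

lemma coe_closure_eq_union_smul {S : Set G}
    (hconj : ∀ x ∈ K, g⁻¹ * x * g ∈ K) (hsq : g ^ 2 ∈ K)
    (hK : K ≤ closure S) (hg : g ∈ closure S) (hS : S ⊆ (K : Set G) ∪ g • (K : Set G)) :
    (closure S : Set G) = (K : Set G) ∪ g • (K : Set G) := by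
  refine subset_antisymm ((closure_le (K.unionSmul hconj hsq)).2 hS) ?_
  rintro x (hx | hx)
  · exact hK hx
  · rw [mem_leftCoset_iff] at hx
    simpa using mul_mem hg (hK hx)

end Subgroup

variable [DecidableEq G]

section WordSet

variable {S : Finset G} {a b c : G}

lemma mem_wordBase_of_mem (h : a ∈ S) : a ∈ S ∪ S⁻¹ ∪ {1} := by simp [h]

lemma inv_mem_wordBase_of_mem (h : a ∈ S) : a⁻¹ ∈ S ∪ S⁻¹ ∪ {1} := by simp [h]

lemma one_mem_wordBase : (1 : G) ∈ S ∪ S⁻¹ ∪ {1} := by simp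

lemma mem_wordSet_three {x : G} (ha : a ∈ S ∪ S⁻¹ ∪ {1}) (hb : b ∈ S ∪ S⁻¹ ∪ {1})
    (hc : c ∈ S ∪ S⁻¹ ∪ {1}) (h : a * b * c = x) : x ∈ wordSet S 3 := by
  rw [← h, wordSet, pow_succ, sq]
  exact mul_mem_mul (mul_mem_mul ha hb) hc

lemma coe_wordSet_subset_closure (S : Finset G) (m : ℕ) :
    (wordSet S m : Set G) ⊆ Subgroup.closure (S : Set G) := by
  have hbase : ((S ∪ S⁻¹ ∪ {1} : Finset G) : Set G) ⊆ Subgroup.closure (S : Set G) := by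
    simp only [coe_union, coe_inv, coe_singleton, Set.union_subset_iff, Set.singleton_subset_iff]
    exact ⟨⟨Subgroup.subset_closure,
      fun x hx => by simpa using inv_mem (Subgroup.subset_closure hx)⟩, one_mem _⟩
  rw [wordSet, coe_pow]
  exact Subgroup.subset_closure.trans
    (Subgroup.closure_pow_le.trans ((Subgroup.closure_le _).2 hbase))

end WordSet

def indexTwoGenerators (C C' : Finset G) (g : G) : Finset G :=
  C ∪ C' ∪ (C.image fun c => g * c * g⁻¹) ∪ (C'.image fun c => g * c * g⁻¹) ∪ {g ^ 2}

section IndexTwoGenerators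

variable {C C' : Finset G} {g : G}

lemma forall_mem_indexTwoGenerators {p : G → Prop} :
    (∀ x ∈ indexTwoGenerators C C' g, p x) ↔ (∀ c ∈ C, p c) ∧ (∀ c ∈ C', p c) ∧
      (∀ c ∈ C, p (g * c * g⁻¹)) ∧ (∀ c ∈ C', p (g * c * g⁻¹)) ∧ p (g ^ 2) := by
  simp only [indexTwoGenerators, forall_mem_union, forall_mem_image, mem_singleton, forall_eq,
    and_assoc]

lemma union_subset_indexTwoGenerators : C ∪ C' ⊆ indexTwoGenerators C C' g := by
  unfold indexTwoGenerators
  grind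

lemma sq_mem_indexTwoGenerators : g ^ 2 ∈ indexTwoGenerators C C' g := by
  simp [indexTwoGenerators]

lemma conj_mem_indexTwoGenerators {c : G} (hc : c ∈ C ∪ C') :
    g * c * g⁻¹ ∈ indexTwoGenerators C C' g := by
  unfold indexTwoGenerators
  grind

lemma smul_mem_union_smul {c : G} (hc : c ∈ C') : g * c ∈ C ∪ g • C' :=
  mem_union_right _ (smul_mem_smul_finset hc)

lemma mem_union_smul_of_one_mem (h1 : 1 ∈ C') : g ∈ C ∪ g • C' := by
  simpa using smul_mem_union_smul (g := g) (C := C) h1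

lemma indexTwoGenerators_subset_wordSet (h1 : 1 ∈ C') :
    indexTwoGenerators C C' g ⊆ wordSet (C ∪ g • C') 3 := by
  have hg : g ∈ C ∪ g • C' := mem_union_smul_of_one_mem h1
  have hC : ∀ c ∈ C, c ∈ (C ∪ g • C') ∪ (C ∪ g • C')⁻¹ ∪ {1} := fun c hc =>
    mem_wordBase_of_mem (mem_union_left _ hc)
  have hgC' : ∀ c ∈ C', g * c ∈ (C ∪ g • C') ∪ (C ∪ g • C')⁻¹ ∪ {1} := fun c hc =>
    mem_wordBase_of_mem (smul_mem_union_smul hc)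
  refine fun x hx => forall_mem_indexTwoGenerators.2 ⟨?_, ?_, ?_, ?_, ?_⟩ x hx
  · exact fun c hc => mem_wordSet_three (hC c hc) one_mem_wordBase one_mem_wordBase (by group)
  · exact fun c hc => mem_wordSet_three (inv_mem_wordBase_of_mem hg) (hgC' c hc)
      one_mem_wordBase (by group)
  · exact fun c hc => mem_wordSet_three (mem_wordBase_of_mem hg) (hC c hc)
      (inv_mem_wordBase_of_mem hg) rfl
  · exact fun c hc => mem_wordSet_three (hgC' c hc) (inv_mem_wordBase_of_mem hg)
      one_mem_wordBase (by group)
  · exact mem_wordSet_three (mem_wordBase_of_mem hg) (mem_wordBase_of_mem hg) one_mem_wordBase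
      (by rw [mul_one, sq])

lemma coe_indexTwoGenerators_subset {H : Subgroup G} (hH : H.index = 2)
    (hC : (C : Set G) ⊆ H) (hC' : (C' : Set G) ⊆ H) :
    (indexTwoGenerators C C' g : Set G) ⊆ H := by
  have hconj : ∀ c ∈ H, g * c * g⁻¹ ∈ H := fun c hc =>
    (Subgroup.normal_of_index_eq_two hH).conj_mem c hc g
  refine fun x hx => forall_mem_indexTwoGenerators.2 ⟨fun c hc => hC hc, fun c hc => hC' hc,
    fun c hc => hconj c (hC hc), fun c hc => hconj c (hC' hc),
    Subgroup.sq_mem_of_index_two hH g⟩ x hx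

lemma card_union_smul_le_two_mul_card_indexTwoGenerators :
    #(C ∪ g • C') ≤ 2 * #(indexTwoGenerators C C' g) := by
  have hsub := union_subset_indexTwoGenerators (C := C) (C' := C') (g := g)
  have hC := card_le_card (union_subset_left hsub)
  have hC' := card_le_card (union_subset_right hsub)
  have := card_union_le C (g • C')
  rw [card_smul_finset] at this
  omega

lemma card_indexTwoGenerators_le : #(indexTwoGenerators C C' g) ≤ 2 * (#C + #C') + 1 := by
  have h₁ := card_union_le C C'
  have h₂ := card_union_le (C ∪ C') (C.image fun c => g * c * g⁻¹)
  have h₃ := card_union_le (C ∪ C' ∪ C.image fun c => g * c * g⁻¹)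
    (C'.image fun c => g * c * g⁻¹)
  have h₄ := card_union_le (C ∪ C' ∪ (C.image fun c => g * c * g⁻¹) ∪
    (C'.image fun c => g * c * g⁻¹)) {g ^ 2}
  have h₅ := card_image_le (s := C) (f := fun c => g * c * g⁻¹)
  have h₆ := card_image_le (s := C') (f := fun c => g * c * g⁻¹)
  rw [card_singleton] at h₄
  unfold indexTwoGenerators
  omega

lemma card_union_smul_of_subset_of_notMem {H : Subgroup G} (hC : (C : Set G) ⊆ H)
    (hC' : (C' : Set G) ⊆ H) (hg : g ∉ H) : #(C ∪ g • C') = #C + #C' := by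
  have hdisj : Disjoint C (g • C') := by
    rw [disjoint_left]
    intro x hx hgx
    obtain ⟨c, hc, rfl⟩ := mem_smul_finset.1 hgx
    exact hg ((H.mul_mem_cancel_right (hC' hc)).1 (hC hx))
  rw [card_union_of_disjoint hdisj, card_smul_finset]

lemma card_indexTwoGenerators_le_four_mul_card_union_smul {H : Subgroup G}
    (hC : (C : Set G) ⊆ H) (hC' : (C' : Set G) ⊆ H) (hg : g ∉ H) (h1 : 1 ∈ C') :
    #(indexTwoGenerators C C' g) ≤ 4 * #(C ∪ g • C') := by
  have hC'pos : 1 ≤ #C' := card_pos.2 ⟨1, h1⟩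
  rw [card_union_smul_of_subset_of_notMem hC hC' hg]
  linarith [card_indexTwoGenerators_le (C := C) (C' := C') (g := g)]

lemma image_conj_indexTwoGenerators_subset_wordSet :
    ((indexTwoGenerators C C' g).image fun a => g⁻¹ * a * g) ⊆
      wordSet (indexTwoGenerators C C' g) 3 := by
  set A := indexTwoGenerators C C' g
  have hg2 : g ^ 2 ∈ A := sq_mem_indexTwoGenerators
  have hA : ∀ {c}, c ∈ C ∪ C' → c ∈ A ∪ A⁻¹ ∪ {1} := fun hc =>
    mem_wordBase_of_mem (union_subset_indexTwoGenerators hc)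
  have hconj : ∀ {c}, c ∈ C ∪ C' → g * c * g⁻¹ ∈ A ∪ A⁻¹ ∪ {1} := fun hc =>
    mem_wordBase_of_mem (conj_mem_indexTwoGenerators hc)
  refine forall_mem_image.2 (forall_mem_indexTwoGenerators.2 ⟨?_, ?_, ?_, ?_, ?_⟩)
  · exact fun c hc => mem_wordSet_three (inv_mem_wordBase_of_mem hg2)
      (hconj (mem_union_left _ hc)) (mem_wordBase_of_mem hg2) (by group)
  · exact fun c hc => mem_wordSet_three (inv_mem_wordBase_of_mem hg2)
      (hconj (mem_union_right _ hc)) (mem_wordBase_of_mem hg2) (by group)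
  · exact fun c hc => mem_wordSet_three (hA (mem_union_left _ hc)) one_mem_wordBase
      one_mem_wordBase (by group)
  · exact fun c hc => mem_wordSet_three (hA (mem_union_right _ hc)) one_mem_wordBase
      one_mem_wordBase (by group)
  · exact mem_wordSet_three (mem_wordBase_of_mem hg2) one_mem_wordBase one_mem_wordBase
      (by group)

lemma coe_closure_union_smul_eq (h1 : 1 ∈ C') :
    (Subgroup.closure ((C ∪ g • C' : Finset G) : Set G) : Set G) =
      (Subgroup.closure (indexTwoGenerators C C' g : Set G) : Set G) ∪
        g • (Subgroup.closure (indexTwoGenerators C C' g : Set G) : Set G) := by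
  set A := indexTwoGenerators C C' g
  have hconj : ∀ a ∈ (A : Set G), g⁻¹ * a * g ∈ Subgroup.closure (A : Set G) := fun a ha =>
    coe_wordSet_subset_closure A 3
      (image_conj_indexTwoGenerators_subset_wordSet (mem_image_of_mem _ ha))
  have hg : g ∈ C ∪ g • C' := mem_union_smul_of_one_mem h1
  refine Subgroup.coe_closure_eq_union_smul
    (fun x hx => Subgroup.conj_mem_closure_of_forall hconj hx)
    (Subgroup.subset_closure (sq_mem_indexTwoGenerators (C := C) (C' := C')))
    ((Subgroup.closure_le _).2 ((coe_subset.2 (indexTwoGenerators_subset_wordSet h1)).trans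
      (coe_wordSet_subset_closure _ 3)))
    (Subgroup.subset_closure (mem_coe.2 hg)) ?_
  intro x hx
  rcases mem_union.1 hx with hx | hx
  · exact Or.inl (Subgroup.subset_closure (union_subset_indexTwoGenerators (mem_union_left _ hx)))
  · obtain ⟨c, hc, rfl⟩ := mem_smul_finset.1 hx
    exact Or.inr (Set.smul_mem_smul_set
      (Subgroup.subset_closure (union_subset_indexTwoGenerators (mem_union_right _ hc))))

end IndexTwoGenerators

end

/-- Passage to an index-2 subgroup: from `A' = C ∪ gC'` not contained in `H`,
the set `A = C ∪ C' ∪ gCg⁻¹ ∪ gC'g⁻¹ ∪ {g²}` lies in `A'_3 ∩ H`, has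
comparable size, contains `C ∪ C'` and `g²`, satisfies `g⁻¹Ag ⊆ A_3`, and
`⟨A'⟩ = ⟨A⟩ ∪ g⟨A⟩`. -/
theorem stmt14 {G : Type*} [Group G] [DecidableEq G] (H : Subgroup G)
    (hH : H.index = 2) (A' C C' : Finset G) (g : G)
    (hC : (C : Set G) ⊆ (H : Set G)) (hC' : (C' : Set G) ⊆ (H : Set G))
    (hg : g ∉ H) (h1 : (1 : G) ∈ C') (hA' : A' = C ∪ g • C') :
    (C ∪ C' ∪ (C.image fun c => g * c * g⁻¹) ∪ (C'.image fun c => g * c * g⁻¹)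
        ∪ {g ^ 2}) ⊆ wordSet A' 3 ∧
    ((C ∪ C' ∪ (C.image fun c => g * c * g⁻¹) ∪ (C'.image fun c => g * c * g⁻¹)
        ∪ {g ^ 2} : Finset G) : Set G) ⊆ (H : Set G) ∧
    A'.card ≤ 2 * (C ∪ C' ∪ (C.image fun c => g * c * g⁻¹)
        ∪ (C'.image fun c => g * c * g⁻¹) ∪ {g ^ 2}).card ∧
    (C ∪ C' ∪ (C.image fun c => g * c * g⁻¹) ∪ (C'.image fun c => g * c * g⁻¹)
        ∪ {g ^ 2}).card ≤ 4 * A'.card ∧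
    C ∪ C' ⊆ (C ∪ C' ∪ (C.image fun c => g * c * g⁻¹)
        ∪ (C'.image fun c => g * c * g⁻¹) ∪ {g ^ 2}) ∧
    g ^ 2 ∈ (C ∪ C' ∪ (C.image fun c => g * c * g⁻¹)
        ∪ (C'.image fun c => g * c * g⁻¹) ∪ {g ^ 2}) ∧
    ((C ∪ C' ∪ (C.image fun c => g * c * g⁻¹) ∪ (C'.image fun c => g * c * g⁻¹)
        ∪ {g ^ 2}).image fun a => g⁻¹ * a * g) ⊆
      wordSet (C ∪ C' ∪ (C.image fun c => g * c * g⁻¹)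
        ∪ (C'.image fun c => g * c * g⁻¹) ∪ {g ^ 2}) 3 ∧
    (Subgroup.closure (A' : Set G) : Set G) =
      (Subgroup.closure ((C ∪ C' ∪ (C.image fun c => g * c * g⁻¹)
          ∪ (C'.image fun c => g * c * g⁻¹) ∪ {g ^ 2} : Finset G) : Set G) : Set G) ∪
        g • (Subgroup.closure ((C ∪ C' ∪ (C.image fun c => g * c * g⁻¹)
          ∪ (C'.image fun c => g * c * g⁻¹) ∪ {g ^ 2} : Finset G) : Set G) : Set G) := by
  subst hA'
  exact ⟨indexTwoGenerators_subset_wordSet h1, coe_indexTwoGenerators_subset hH hC hC',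
    card_union_smul_le_two_mul_card_indexTwoGenerators,
    card_indexTwoGenerators_le_four_mul_card_union_smul hC hC' hg h1,
    union_subset_indexTwoGenerators, sq_mem_indexTwoGenerators,
    image_conj_indexTwoGenerators_subset_wordSet, coe_closure_union_smul_eq h1⟩
end

section
/- Let G be a group, and suppose there is no strictly increasing chain of subgroups {e} < G₁ < G₂ < ⋯ < G_r < [G,G] with r ≥ ℓ. Let A ⊆ G be finite and B ⊆ A. Then there exist k, k' depending only on ℓ and elements g₁, …, g_k ∈ A_{k'} such that the subgroup generated by B ∪ g₁Bg₁⁻¹ ∪ ⋯ ∪ g_kBg_k⁻¹ is a normal subgroup of ⟨A⟩. Concretely, one may take k = 2^ℓ − 1 and k' = ℓ. -/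
open Finset Pointwise

/-!
Grow a set `W ∋ 1` of conjugators, starting from `{1}`: as long as some `t ∈ A ∪ A⁻¹` fails to
normalize `N(W) = ⟨w b w⁻¹ : w ∈ W, b ∈ B⟩`, replace `W` by `W ∪ t • W`, which at most doubles
`|W|` and lengthens its words by one letter. Since `⟨B⟩ ≤ N(W) ≤ ⟨B⟩[G,G]`, and a subgroup in
this range is determined by its intersection with the normal subgroup `[G,G]`, every step
strictly enlarges `N(W) ∩ [G,G]`. The chain condition therefore stops the process within `ℓ`
steps, unless `N(W)` contains `[G,G]`, in which case it is normal anyway.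
-/

section Chain

variable {α : Type*} [Preorder α] [OrderBot α]

def HasChainBelow (n : ℕ) (a : α) : Prop :=
  ∃ c : Fin n → α, StrictMono c ∧ ∀ i, ⊥ < c i ∧ c i ≤ a

theorem hasChainBelow_zero (a : α) : HasChainBelow 0 a :=
  ⟨Fin.elim0, fun i => i.elim0, fun i => i.elim0⟩

theorem HasChainBelow.succ_of_lt {n : ℕ} {a b : α} (h : HasChainBelow n a) (hab : a < b) :
    HasChainBelow (n + 1) b := by
  obtain ⟨c, hc, hca⟩ := h
  have hcb : ∀ i, c i < b := fun i => (hca i).2.trans_lt hab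
  refine ⟨Fin.snoc c b, fun i j hij => ?_, fun i => ?_⟩
  · induction j using Fin.lastCases with
    | last =>
      obtain ⟨i, rfl⟩ := Fin.exists_castSucc_eq.2 hij.ne
      simpa using hcb i
    | cast j =>
      obtain ⟨i, rfl⟩ := Fin.exists_castSucc_eq.2 (hij.trans (Fin.castSucc_lt_last j)).ne
      simpa using hc (Fin.castSucc_lt_castSucc_iff.1 hij)
  · induction i using Fin.lastCases with
    | last => simpa using And.intro (bot_le.trans_lt hab) (le_refl b)
    | cast i => simpa using And.intro (hca i).1 (hcb i).le

end Chain

namespace Subgroup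

variable {G : Type*} [Group G]

theorem eq_of_le_of_inf_eq_of_le_sup {N M K : Subgroup G} [K.Normal] (hNM : N ≤ M)
    (hMNK : M ≤ N ⊔ K) (hinf : N ⊓ K = M ⊓ K) : N = M := by
  refine le_antisymm hNM fun m hm => ?_
  obtain ⟨n, hn, k, hk, rfl⟩ := mem_sup_of_normal_right.1 (hMNK hm)
  have hkM : k ∈ M := (mul_mem_cancel_left (hNM hn)).1 hm
  have hkN : k ∈ N := (hinf ▸ mem_inf.2 ⟨hkM, hk⟩ : k ∈ N ⊓ K).1
  exact mul_mem hn hkN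

theorem exists_conj_notMem_of_notMem_normalizer {H : Subgroup G} {g : G}
    (hg : g ∉ normalizer (H : Set G)) : ∃ t ∈ ({g, g⁻¹} : Set G), ∃ x ∈ H, t * x * t⁻¹ ∉ H := by
  by_contra! h
  refine hg (mem_normalizer_iff.2 fun x => ⟨h g (by simp) x, fun hx => ?_⟩)
  simpa [mul_assoc] using h g⁻¹ (by simp) _ hx

end Subgroup

section ConjClosure

variable {G : Type*} [Group G]

def conjClosure (W B : Set G) : Subgroup G :=
  Subgroup.closure (⋃ w ∈ W, (fun b => w * b * w⁻¹) '' B)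

variable {W W' B : Set G}

theorem conj_mem_conjClosure {w b : G} (hw : w ∈ W) (hb : b ∈ B) :
    w * b * w⁻¹ ∈ conjClosure W B :=
  Subgroup.subset_closure (Set.mem_biUnion hw ⟨b, hb, rfl⟩)

theorem conjClosure_mono (h : W ⊆ W') : conjClosure W B ≤ conjClosure W' B :=
  Subgroup.closure_mono (Set.biUnion_subset_biUnion_left h)

theorem closure_le_conjClosure (h1 : (1 : G) ∈ W) : Subgroup.closure B ≤ conjClosure W B :=
  (Subgroup.closure_le _).2 fun b hb => by simpa using conj_mem_conjClosure h1 hb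

theorem conjClosure_le_closure_sup_commutator :
    conjClosure W B ≤ Subgroup.closure B ⊔ commutator G := by
  have := Subgroup.Normal.of_commutator_le (h := le_sup_right (a := Subgroup.closure B))
  refine (Subgroup.closure_le _).2 (Set.iUnion₂_subset fun w _ => ?_)
  rintro _ ⟨b, hb, rfl⟩
  exact this.conj_mem b (Subgroup.mem_sup_left (Subgroup.subset_closure hb)) w

theorem conj_mem_conjClosure_smul (t : G) {x : G} (hx : x ∈ conjClosure W B) :
    t * x * t⁻¹ ∈ conjClosure (t • W) B := by
  suffices conjClosure W B ≤ (conjClosure (t • W) B).comap (MulAut.conj t).toMonoidHom from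
    this hx
  refine (Subgroup.closure_le _).2 (Set.iUnion₂_subset fun w hw => ?_)
  rintro _ ⟨b, hb, rfl⟩
  simpa [mul_assoc] using conj_mem_conjClosure (Set.smul_mem_smul_set (a := t) hw) hb

theorem conjClosure_inf_commutator_lt (h1 : (1 : G) ∈ W) {t x : G}
    (hx : x ∈ conjClosure W B) (htx : t * x * t⁻¹ ∉ conjClosure W B) :
    conjClosure W B ⊓ commutator G < conjClosure (W ∪ t • W) B ⊓ commutator G := by
  have hle : conjClosure W B ≤ conjClosure (W ∪ t • W) B :=
    conjClosure_mono Set.subset_union_left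
  refine lt_of_le_of_ne (inf_le_inf_right _ hle) fun h => htx ?_
  have hsup : conjClosure (W ∪ t • W) B ≤ conjClosure W B ⊔ commutator G :=
    conjClosure_le_closure_sup_commutator.trans (sup_le_sup_right (closure_le_conjClosure h1) _)
  rw [Subgroup.eq_of_le_of_inf_eq_of_le_sup hle hsup h]
  exact conjClosure_mono Set.subset_union_right (conj_mem_conjClosure_smul t hx)

end ConjClosure

theorem Finset.exists_fin_insert_range_eq {α : Type*} [DecidableEq α] {s : Finset α} {a : α}
    (ha : a ∈ s) {m : ℕ} (hm : #s ≤ m + 1) : ∃ f : Fin m → α, insert a (Set.range f) = s := by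
  set t := s.erase a
  have ht : #t ≤ m := by rw [card_erase_of_mem ha]; omega
  refine ⟨fun i => if h : (i : ℕ) < #t then t.equivFin.symm ⟨i, h⟩ else a, ?_⟩
  ext y
  constructor
  · rintro (rfl | ⟨i, rfl⟩)
    · exact ha
    · dsimp only
      split_ifs
      exacts [mem_of_mem_erase (t.equivFin.symm _).2, ha]
  · intro hy
    by_cases hya : y = a
    · exact Or.inl hya
    · set i := t.equivFin ⟨y, mem_erase.2 ⟨hya, hy⟩⟩
      refine Or.inr ⟨⟨i, i.2.trans_le ht⟩, ?_⟩
      simp [i]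

section Conjugators

variable {G : Type*} [Group G] [DecidableEq G]

theorem wordSet_subset_wordSet_succ (A : Finset G) (n : ℕ) : wordSet A n ⊆ wordSet A (n + 1) :=
  pow_subset_pow_right (by simp) n.le_succ

theorem mul_mem_wordSet_succ {A : Finset G} {n : ℕ} {t x : G} (ht : t ∈ A ∪ A⁻¹ ∪ {1})
    (hx : x ∈ wordSet A n) : t * x ∈ wordSet A (n + 1) := by
  rw [wordSet, pow_succ']
  exact mul_mem_mul ht hx

theorem exists_conjugators_normalizing_or_hasChainBelow (A : Finset G) (B : Set G) (n : ℕ) :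
    ∃ W : Finset G, 1 ∈ W ∧ #W ≤ 2 ^ n ∧ W ⊆ wordSet A n ∧
      ((A : Set G) ⊆ Subgroup.normalizer (conjClosure (W : Set G) B : Set G) ∨
        HasChainBelow n (conjClosure (W : Set G) B ⊓ commutator G)) := by
  induction n with
  | zero =>
    exact ⟨{1}, mem_singleton_self 1, by simp, by simp [wordSet], Or.inr (hasChainBelow_zero _)⟩
  | succ n ih =>
    obtain ⟨W, h1, hcard, hWA, hW⟩ := ih
    have hcard' : #W ≤ 2 ^ (n + 1) := hcard.trans (Nat.pow_le_pow_right two_pos n.le_succ)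
    by_cases hnorm : (A : Set G) ⊆ Subgroup.normalizer (conjClosure (W : Set G) B : Set G)
    · exact ⟨W, h1, hcard', hWA.trans (wordSet_subset_wordSet_succ A n), Or.inl hnorm⟩
    obtain ⟨a, ha, hna⟩ := Set.not_subset.1 hnorm
    obtain ⟨t, ht, x, hx, htx⟩ := Subgroup.exists_conj_notMem_of_notMem_normalizer hna
    have htA : t ∈ A ∪ A⁻¹ ∪ {1} := by
      rcases ht with rfl | rfl <;> simp [mem_coe.1 ha]
    refine ⟨W ∪ t • W, mem_union_left _ h1, ?_, ?_, Or.inr ?_⟩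
    · calc #(W ∪ t • W) ≤ #W + #(t • W) := card_union_le _ _
        _ = 2 * #W := by rw [card_smul_finset, two_mul]
        _ ≤ 2 ^ (n + 1) := by rw [pow_succ']; omega
    · refine union_subset (hWA.trans (wordSet_subset_wordSet_succ A n)) fun y hy => ?_
      obtain ⟨w, hw, rfl⟩ := mem_smul_finset.1 hy
      exact mul_mem_wordSet_succ htA (hWA hw)
    · push_cast
      exact (hW.resolve_left hnorm).succ_of_lt (conjClosure_inf_commutator_lt h1 hx htx)

theorem exists_conjugators_normalizing {ℓ : ℕ}
    (hchain : ¬ ∃ c : Fin ℓ → Subgroup G, StrictMono c ∧ ∀ i, ⊥ < c i ∧ c i < commutator G)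
    (A : Finset G) (B : Set G) :
    ∃ W : Finset G, 1 ∈ W ∧ #W ≤ 2 ^ ℓ ∧ W ⊆ wordSet A ℓ ∧
      Subgroup.closure (A : Set G) ≤ Subgroup.normalizer (conjClosure (W : Set G) B : Set G) := by
  obtain ⟨W, h1, hcard, hWA, hnorm | hchainW⟩ :=
    exists_conjugators_normalizing_or_hasChainBelow A B ℓ
  · exact ⟨W, h1, hcard, hWA, (Subgroup.closure_le _).2 hnorm⟩
  refine ⟨W, h1, hcard, hWA, ?_⟩
  by_cases hK : commutator G ≤ conjClosure (W : Set G) B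
  · have := Subgroup.Normal.of_commutator_le (h := hK)
    simp [Subgroup.normalizer_eq_top]
  · obtain ⟨c, hc, hcK⟩ := hchainW
    exact absurd ⟨c, hc, fun i => ⟨(hcK i).1, (hcK i).2.trans_lt (inf_lt_right.2 hK)⟩⟩ hchain

end Conjugators

theorem stmt17_general {G : Type*} [Group G] [DecidableEq G] (ℓ : ℕ)
    (hchain : ¬ ∃ c : Fin ℓ → Subgroup G, StrictMono c ∧
      ∀ i, ⊥ < c i ∧ c i < commutator G)
    (A B : Finset G) :
    ∃ g : Fin (2 ^ ℓ - 1) → G, (∀ i, g i ∈ wordSet A ℓ) ∧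
      ∀ a ∈ Subgroup.closure (A : Set G),
        ∀ x ∈ Subgroup.closure
            ((B : Set G) ∪ ⋃ i, (fun b => g i * b * (g i)⁻¹) '' (B : Set G)),
          a * x * a⁻¹ ∈ Subgroup.closure
            ((B : Set G) ∪ ⋃ i, (fun b => g i * b * (g i)⁻¹) '' (B : Set G)) := by
  obtain ⟨W, h1, hcard, hWA, hnorm⟩ := exists_conjugators_normalizing hchain A B
  obtain ⟨g, hg⟩ := exists_fin_insert_range_eq h1 (m := 2 ^ ℓ - 1)
    (by rwa [Nat.sub_add_cancel Nat.one_le_two_pow])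
  have hgens : (B : Set G) ∪ ⋃ i, (fun b => g i * b * (g i)⁻¹) '' (B : Set G) =
      ⋃ w ∈ (W : Set G), (fun b => w * b * w⁻¹) '' (B : Set G) := by
    rw [← hg, Set.biUnion_insert, Set.biUnion_range]
    simp
  have hgW : ∀ i, g i ∈ W := fun i => by
    rw [← mem_coe, ← hg]
    exact Or.inr ⟨i, rfl⟩
  refine ⟨g, fun i => hWA (hgW i), fun a ha x hx => ?_⟩
  rw [hgens] at hx ⊢
  exact (Subgroup.mem_normalizer_iff.1 (hnorm ha) x).1 hx

/-- If `G` has no strictly increasing chain of `ℓ` subgroups strictly between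
`{e}` and `[G,G]`, then for `B ⊆ A` there are `2^ℓ − 1` elements `gᵢ ∈ A_ℓ`
such that `⟨B ∪ ⋃ᵢ gᵢBgᵢ⁻¹⟩` is normal in `⟨A⟩`. -/
theorem stmt17 {G : Type*} [Group G] [DecidableEq G] (ℓ : ℕ) (hℓ : 1 ≤ ℓ)
    (hchain : ¬ ∃ c : Fin ℓ → Subgroup G, StrictMono c ∧
      ∀ i, ⊥ < c i ∧ c i < commutator G)
    (A B : Finset G) (hB : B ⊆ A) :
    ∃ g : Fin (2 ^ ℓ - 1) → G, (∀ i, g i ∈ wordSet A ℓ) ∧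
      ∀ a ∈ Subgroup.closure (A : Set G),
        ∀ x ∈ Subgroup.closure
            ((B : Set G) ∪ ⋃ i, (fun b => g i * b * (g i)⁻¹) '' (B : Set G)),
          a * x * a⁻¹ ∈ Subgroup.closure
            ((B : Set G) ∪ ⋃ i, (fun b => g i * b * (g i)⁻¹) '' (B : Set G)) :=
  stmt17_general ℓ hchain A B
end
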